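/- arXiv:1507.03101 — 2 statements merged into one kernel-verified Lean document; each statement's English description precedes it below -/
import Mathlib

section
/- Let p be a prime and α a positive integer. Then in ℤ[[q]], (q;q)_∞^{p^α} ≡ (q^p;q^p)_∞^{p^{α−1}} (mod p^α), i.e., every coefficient of the difference is divisible by p^α. -/
/-- The Euler product `(q;q)_∞ = ∏_{k≥1} (1 - q^k)` as a formal power series over `ℤ`.
Its `n`-th coefficient agrees with that of any truncated product `∏_{k=1}^{N}(1-q^k)`
with `N ≥ n`. -/
noncomputable def eulerQ : PowerSeries ℤ :=
  PowerSeries.mk fun n =>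
    PowerSeries.coeff (R := ℤ) n (∏ k ∈ Finset.range (n + 1), (1 - PowerSeries.X ^ (k + 1)))

/-- Image of a power series under the substitution `q ↦ q^k` (intended for `k ≥ 1`). -/
noncomputable def substPow (k : ℕ) (f : PowerSeries ℤ) : PowerSeries ℤ :=
  PowerSeries.mk fun n => if k ∣ n then PowerSeries.coeff (R := ℤ) (n / k) f else 0

/-- Image of a power series under the substitution `q ↦ -q`. -/
noncomputable def substNeg (f : PowerSeries ℤ) : PowerSeries ℤ :=
  PowerSeries.rescale (-1 : ℤ) f

/-- Ramanujan's theta function `φ(q) = ∑_{n ∈ ℤ} q^{n²}`. -/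
noncomputable def phiTheta : PowerSeries ℤ :=
  PowerSeries.mk fun n => (Set.ncard {m : ℤ | m ^ 2 = (n : ℤ)} : ℤ)

/-- Ramanujan's theta function `ψ(q) = ∑_{n ≥ 0} q^{n(n+1)/2}`. -/
noncomputable def psiTheta : PowerSeries ℤ :=
  PowerSeries.mk fun n => (Set.ncard {m : ℕ | m * (m + 1) / 2 = n} : ℤ)

/-- The cubic theta function `a(q) = ∑_{m,n ∈ ℤ} q^{m² + mn + n²}`. -/
noncomputable def aCubic : PowerSeries ℤ :=
  PowerSeries.mk fun n =>
    (Set.ncard {p : ℤ × ℤ | p.1 ^ 2 + p.1 * p.2 + p.2 ^ 2 = (n : ℤ)} : ℤ)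

/-- The theta function `X(q) = ∑_{n ∈ ℤ} q^{3n² + 2n}`. -/
noncomputable def xTheta : PowerSeries ℤ :=
  PowerSeries.mk fun n => (Set.ncard {m : ℤ | 3 * m ^ 2 + 2 * m = (n : ℤ)} : ℤ)

/-- The quadratic form `Q(m₁,…,m₅) = ∑ mᵢ² + ∑_{i<j} mᵢ mⱼ`. -/
def frobQ (v : Fin 5 → ℤ) : ℤ :=
  (∑ i, v i ^ 2) + ∑ i, ∑ j, if i < j then v i * v j else 0

/-- The theta series `∑_{m₁,…,m₅ ∈ ℤ} q^{Q(m₁,…,m₅)}`. -/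
noncomputable def frobTheta : PowerSeries ℤ :=
  PowerSeries.mk fun n => (Set.ncard {v : Fin 5 → ℤ | frobQ v = (n : ℤ)} : ℤ)

/-- The 6-colored generalized Frobenius partition function `cφ₆(n)`, defined by
`∑_{n≥0} cφ₆(n) qⁿ = (q;q)_∞^{-6} · ∑_{m₁,…,m₅} q^{Q(m₁,…,m₅)}`; here `(q;q)_∞^{-1}` is
realized via `PowerSeries.invOfUnit` (the constant coefficient of `eulerQ` is `1`). -/
noncomputable def cphi6 (n : ℕ) : ℤ :=
  PowerSeries.coeff (R := ℤ) n (PowerSeries.invOfUnit eulerQ 1 ^ 6 * frobTheta)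

/-! Over `𝔽_p` the Frobenius gives `f ^ p = f(q ^ p)` for every power series `f`, so
`p ∣ f ^ p - f(q ^ p)` in `ℤ⟦X⟧`. The classical lifting
`a ≡ b [p] → a ^ p ^ k ≡ b ^ p ^ k [p ^ (k + 1)]` then yields the congruence for every `f`,
in particular for `(q;q)_∞`. -/

open PowerSeries

theorem PowerSeries.C_dvd_iff_dvd_coeff {R : Type*} [CommSemiring R] (r : R) (f : R⟦X⟧) :
    C r ∣ f ↔ ∀ n, r ∣ coeff n f := by
  constructor
  · rintro ⟨g, rfl⟩ n
    exact ⟨coeff n g, coeff_C_mul n g r⟩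
  · intro h
    choose g hg using h
    exact ⟨mk g, by ext n; rw [coeff_C_mul, coeff_mk, hg]⟩

theorem substPow_eq_expand {k : ℕ} (hk : k ≠ 0) (f : ℤ⟦X⟧) :
    substPow k f = expand k hk f := by
  ext n
  rw [substPow, coeff_mk, coeff_expand]

theorem PowerSeries.pow_prime_eq_expand_zmod (p : ℕ) [Fact p.Prime] (f : (ZMod p)⟦X⟧) :
    f ^ p = expand p (NeZero.ne p) f := by
  rw [← MvPowerSeries.map_frobenius_expand p (NeZero.ne p), ZMod.frobenius_zmod,
    MvPowerSeries.map_id]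
  rfl

theorem PowerSeries.natCast_dvd_pow_prime_sub_expand {p : ℕ} (hp : p.Prime) (f : ℤ⟦X⟧) :
    (p : ℤ⟦X⟧) ∣ f ^ p - expand p hp.ne_zero f := by
  have := Fact.mk hp
  rw [← map_natCast (C (R := ℤ)), C_dvd_iff_dvd_coeff]
  intro n
  rw [← ZMod.intCast_zmod_eq_zero_iff_dvd, ← eq_intCast (Int.castRingHom (ZMod p)),
    ← coeff_map, map_sub, map_pow, map_expand, pow_prime_eq_expand_zmod, sub_self, map_zero]

theorem PowerSeries.coeff_pow_prime_pow_modEq {p : ℕ} (hp : p.Prime) (f : ℤ⟦X⟧) (k n : ℕ) :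
    coeff n (f ^ p ^ (k + 1)) ≡
      coeff n (expand p hp.ne_zero f ^ p ^ k) [ZMOD (p : ℤ) ^ (k + 1)] := by
  have h := dvd_sub_pow_of_dvd_sub (natCast_dvd_pow_prime_sub_expand hp f) k
  rw [← pow_mul, ← pow_succ', ← map_natCast (C (R := ℤ)), ← map_pow, C_dvd_iff_dvd_coeff] at h
  exact (Int.modEq_iff_dvd.mpr (by simpa only [map_sub] using h n)).symm

/-- For a prime `p` and `α ≥ 1`, `(q;q)_∞^{p^α} ≡ (q^p;q^p)_∞^{p^{α-1}} (mod p^α)`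
coefficientwise. -/
theorem eulerQ_pow_prime_pow_congr (p : ℕ) (hp : p.Prime) (α : ℕ) (hα : 1 ≤ α) (n : ℕ) :
    PowerSeries.coeff (R := ℤ) n (eulerQ ^ p ^ α) ≡
      PowerSeries.coeff (R := ℤ) n (substPow p eulerQ ^ p ^ (α - 1)) [ZMOD ((p : ℤ) ^ α)] := by
  obtain ⟨k, rfl⟩ := Nat.exists_eq_add_of_le' hα
  rw [substPow_eq_expand hp.ne_zero, Nat.add_sub_cancel]
  exact coeff_pow_prime_pow_modEq hp eulerQ k n
end

section
/- The part of (q;q)_∞³ supported on exponents divisible by 3 equals ∑_{m∈ℤ} (−1)^m (6m+1) q^{3m(3m+1)/2}; that is, for every integer n ≥ 0, the coefficient of q^{3n} in (q;q)_∞³ equals (−1)^m (6m+1) if there exists m ∈ ℤ with 3n = 3m(3m+1)/2, and equals 0 otherwise. -/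
/-!
Everything rests on Jacobi's identity `(q;q)_∞³ = ∑_{k ≥ 0} (-1)^k (2k+1) q^{k(k+1)/2}`,
equivalently `(q;q)_∞³ = ½ ∑_{j ∈ ℤ} (-1)^j (2j+1) q^{j(j+1)/2}`. The exponent `j(j+1)/2` is
divisible by 3 exactly when `j ≢ 1 (mod 3)`, i.e. for `j = 3m` and `j = -1-3m`, which contribute
equal terms.

Jacobi's identity comes from its finite form
`(q;q)_n² = ∑_{k ≤ n} (-1)^k (2k+1) q^{k(k+1)/2} [2n+1, n-k]_q`, obtained by expanding
`∏_{k=-n}^{n} (1 - x q^k)` with the `q`-binomial theorem and differentiating in `x` at `x = 1`.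
Since `(q;q)_n [2n+1, n-k]_q ≡ 1 (mod q^{n-k+1})`, multiplying by `(q;q)_n` shows that `(q;q)_n³`
agrees with Jacobi's series below `q^{n+1}`.
-/

open Polynomial Finset

noncomputable def qPoch (n : ℕ) : ℤ[X] := ∏ k ∈ range n, (1 - X ^ (k + 1))

lemma qPoch_succ (n : ℕ) : qPoch (n + 1) = qPoch n * (1 - X ^ (n + 1)) := prod_range_succ _ _

lemma qPoch_ne_zero (n : ℕ) : qPoch n ≠ 0 :=
  prod_ne_zero_iff.2 fun k _ h => by simpa using congrArg (coeff · 0) h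

lemma qPoch_mul_prod_Ico {a b : ℕ} (h : a ≤ b) :
    qPoch a * ∏ i ∈ Ico a b, (1 - X ^ (i + 1)) = qPoch b :=
  prod_range_mul_prod_Ico _ h

noncomputable def gaussBinom : ℕ → ℕ → ℤ[X]
  | _, 0 => 1
  | 0, _ + 1 => 0
  | m + 1, j + 1 => X ^ (j + 1) * gaussBinom m (j + 1) + gaussBinom m j

@[simp] lemma gaussBinom_zero_right (m : ℕ) : gaussBinom m 0 = 1 := by cases m <;> rfl

lemma gaussBinom_succ_succ (m j : ℕ) :
    gaussBinom (m + 1) (j + 1) = X ^ (j + 1) * gaussBinom m (j + 1) + gaussBinom m j := rfl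

lemma gaussBinom_eq_zero_of_lt : ∀ {m j : ℕ}, m < j → gaussBinom m j = 0
  | 0, _ + 1, _ => rfl
  | m + 1, j + 1, h => by
    rw [gaussBinom_succ_succ, gaussBinom_eq_zero_of_lt (by omega),
      gaussBinom_eq_zero_of_lt (by omega : m < j), mul_zero, add_zero]

@[simp] lemma gaussBinom_self : ∀ m, gaussBinom m m = 1
  | 0 => rfl
  | m + 1 => by
    rw [gaussBinom_succ_succ, gaussBinom_eq_zero_of_lt m.lt_succ_self, gaussBinom_self m, mul_zero,
      zero_add]

lemma gaussBinom_mul_qPoch_mul_qPoch : ∀ {m j : ℕ}, j ≤ m →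
    gaussBinom m j * qPoch j * qPoch (m - j) = qPoch m
  | m, 0, _ => by simp [qPoch]
  | m + 1, j + 1, h => by
    obtain rfl | hj := eq_or_lt_of_le (Nat.le_of_succ_le_succ h)
    · simp [qPoch]
    have ih₁ := gaussBinom_mul_qPoch_mul_qPoch (m := m) (j := j + 1) hj
    have ih₂ := gaussBinom_mul_qPoch_mul_qPoch (m := m) (j := j) hj.le
    obtain ⟨d, rfl⟩ := Nat.exists_eq_add_of_lt hj
    rw [show j + d + 1 - (j + 1) = d by omega, qPoch_succ j] at ih₁
    rw [show j + d + 1 - j = d + 1 by omega, qPoch_succ] at ih₂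
    rw [show j + d + 1 + 1 - (j + 1) = d + 1 by omega, gaussBinom_succ_succ, qPoch_succ (j + d + 1),
      qPoch_succ j, qPoch_succ d]
    linear_combination X ^ (j + 1) * (1 - X ^ (d + 1)) * ih₁ + (1 - X ^ (j + 1)) * ih₂

lemma gaussBinom_symm {m j : ℕ} (h : j ≤ m) : gaussBinom m (m - j) = gaussBinom m j := by
  have h' := gaussBinom_mul_qPoch_mul_qPoch (Nat.sub_le m j)
  rw [Nat.sub_sub_self h, ← gaussBinom_mul_qPoch_mul_qPoch h] at h'
  refine mul_right_cancel₀ (mul_ne_zero (qPoch_ne_zero j) (qPoch_ne_zero (m - j))) ?_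
  linear_combination h'

lemma gaussBinom_mul_qPoch {m j : ℕ} (h : j ≤ m) :
    gaussBinom m j * qPoch j = ∏ i ∈ Ico (m - j) m, (1 - X ^ (i + 1)) := by
  refine mul_left_cancel₀ (qPoch_ne_zero (m - j)) ?_
  rw [qPoch_mul_prod_Ico (Nat.sub_le m j), ← gaussBinom_mul_qPoch_mul_qPoch h]
  ring

theorem prod_range_sub_mul_pow {R : Type*} [CommRing R] (q y : R) :
    ∀ (m : ℕ) (x : R), ∏ k ∈ range m, (y - x * q ^ k) =
      ∑ j ∈ range (m + 1),
        (-1) ^ j * aeval q (gaussBinom m j) * q ^ j.choose 2 * y ^ (m - j) * x ^ j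
  | 0, x => by simp
  | m + 1, x => by
    set T := fun j =>
      (-1) ^ j * aeval q (gaussBinom m j) * q ^ j.choose 2 * y ^ (m - j) * (x * q) ^ j
    have hprod : ∏ k ∈ range (m + 1), (y - x * q ^ k) =
        (∏ k ∈ range m, (y - x * q * q ^ k)) * (y - x) := by
      simp [prod_range_succ', pow_succ', mul_assoc]
    have hmid : ∀ j ∈ range m, (-1) ^ (j + 1) * aeval q (gaussBinom (m + 1) (j + 1)) *
        q ^ (j + 1).choose 2 * y ^ (m + 1 - (j + 1)) * x ^ (j + 1) = y * T (j + 1) - x * T j := by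
      intro j hj
      obtain ⟨d, rfl⟩ := Nat.exists_eq_add_of_lt (mem_range.1 hj)
      simp only [T, gaussBinom_succ_succ, Nat.choose_succ_succ', Nat.choose_one_right,
        show j + d + 1 + 1 - (j + 1) = d + 1 by omega, show j + d + 1 - (j + 1) = d by omega,
        show j + d + 1 - j = d + 1 by omega, map_add, map_mul, map_pow, aeval_X]
      ring
    rw [hprod, prod_range_sub_mul_pow q y m (x * q)]
    change (∑ j ∈ range (m + 1), T j) * (y - x) = _
    conv_rhs => rw [sum_range_succ', sum_range_succ, sum_congr rfl hmid, sum_sub_distrib,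
      ← mul_sum, ← mul_sum]
    have h₀ := sum_range_succ' T m
    have h₁ := sum_range_succ T m
    have e₀ : T 0 = y ^ m := by simp [T]
    have e₁ : T m = (-1) ^ m * q ^ (m + m.choose 2) * x ^ m := by simp [T, mul_pow, pow_add]; ring
    simp only [gaussBinom_self, gaussBinom_zero_right, Nat.choose_succ_succ', Nat.choose_one_right,
      Nat.sub_self, Nat.sub_zero, Nat.choose_zero_succ, map_one]
    linear_combination y * h₀ - x * h₁ + y * e₀ - x * e₁

lemma eval_one_derivative_sum_C_mul_X_pow {R : Type*} [CommRing R] (s : Finset ℕ)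
    (c : ℕ → R) :
    eval 1 (derivative (∑ j ∈ s, C (c j) * X ^ j)) = ∑ j ∈ s, (j : R) * c j := by
  simp only [derivative_sum, derivative_C_mul_X_pow, eval_finsetSum, eval_mul, eval_C, eval_pow,
    eval_X, one_pow, mul_one]
  exact sum_congr rfl fun j _ => mul_comm _ _

lemma eval_one_derivative_one_sub_X_mul {R : Type*} [CommRing R] (f : R[X]) :
    eval 1 (derivative ((1 - X) * f)) = -eval 1 f := by
  simp [derivative_mul]

lemma sum_range_natCast_mul_of_antisymm {R : Type*} [CommRing R] (n : ℕ) (c : ℕ → R)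
    (hc : ∀ k ≤ n, c (n + 1 + k) = -c (n - k)) :
    ∑ j ∈ range (2 * n + 2), (j : R) * c j =
      -∑ k ∈ range (n + 1), (2 * k + 1 : R) * c (n - k) := by
  rw [show 2 * n + 2 = (n + 1) + (n + 1) by ring, sum_range_add, ← sum_range_reflect,
    ← sum_neg_distrib, ← sum_add_distrib]
  refine sum_congr rfl fun k hk => ?_
  have hk : k ≤ n := Nat.lt_succ_iff.1 (mem_range.1 hk)
  rw [show n + 1 - 1 - k = n - k by omega, hc k hk, Nat.cast_sub hk]
  push_cast
  ring

lemma prod_range_X_pow_sub_X_pow (n : ℕ) :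
    ∏ k ∈ range n, ((X : ℤ[X]) ^ n - X ^ k) = (-1) ^ n * X ^ n.choose 2 * qPoch n := by
  have h : ∀ k ∈ range n,
      (X : ℤ[X]) ^ n - X ^ k = -1 * X ^ k * (1 - X ^ (n - 1 - k + 1)) := by
    intro k hk
    have hk := mem_range.1 hk
    rw [show n - 1 - k + 1 = n - k by omega]
    conv_lhs => rw [← Nat.add_sub_cancel' hk.le, pow_add]
    ring
  rw [prod_congr rfl h, prod_mul_distrib, prod_mul_distrib, prod_const, card_range,
    prod_pow_eq_pow_sum, sum_range_id, ← Nat.choose_two_right, qPoch,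
    prod_range_reflect (fun k => 1 - (X : ℤ[X]) ^ (k + 1))]

lemma choose_two_sub_add_mul {n k : ℕ} (hk : k ≤ n) :
    (n - k).choose 2 + n * (n + 1 + k) = n + n.choose 2 + n * n + (k + 1).choose 2 := by
  apply Nat.cast_injective (R := ℚ)
  push_cast [Nat.cast_choose_two, Nat.cast_sub hk]
  ring

lemma choose_two_add_add_mul {n k : ℕ} (hk : k ≤ n) :
    (n + 1 + k).choose 2 + n * (n - k) = n + n.choose 2 + n * n + (k + 1).choose 2 := by
  apply Nat.cast_injective (R := ℚ)
  push_cast [Nat.cast_choose_two, Nat.cast_sub hk]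
  ring

/-- With `q = C X` and `x = X`, this is
`∏_{k=0}^{2n} (q^n - x q^k) = q^{n(2n+1)} ∏_{k=-n}^{n} (1 - x q^k)`. -/
noncomputable def jacobiProd (n : ℕ) : ℤ[X][X] :=
  ∏ k ∈ range (2 * n + 1), (C (X ^ n) - X * C X ^ k)

noncomputable def jacobiProdCoeff (n j : ℕ) : ℤ[X] :=
  (-1) ^ j * gaussBinom (2 * n + 1) j * X ^ (j.choose 2 + n * (2 * n + 1 - j))

lemma eval_one_derivative_jacobiProd (n : ℕ) :
    eval 1 (derivative (jacobiProd n)) =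
      -((-1) ^ n * X ^ (n + n.choose 2 + n * n) * qPoch n ^ 2) := by
  have hsplit : jacobiProd n = (1 - X) * (C (X ^ n) *
      ((∏ k ∈ range n, (C (X ^ n) - X * C X ^ k)) *
        ∏ k ∈ range n, (C (X ^ n : ℤ[X]) - X * C X ^ (n + 1 + k)))) := by
    rw [jacobiProd, show 2 * n + 1 = n + (1 + n) by ring, prod_range_add, prod_range_add]
    simp only [range_one, prod_singleton, add_zero, ← add_assoc, ← map_pow]
    ring
  have h : ∀ k ∈ range n, ((X : ℤ[X]) ^ n - X ^ (n + 1 + k)) = X ^ n * (1 - X ^ (k + 1)) :=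
    fun k _ => by ring
  rw [hsplit, eval_one_derivative_one_sub_X_mul]
  simp only [eval_mul, eval_prod, eval_sub, eval_C, eval_X, one_mul, ← map_pow]
  rw [prod_range_X_pow_sub_X_pow, prod_congr rfl h, prod_mul_distrib, prod_const, card_range,
    ← qPoch]
  ring

lemma jacobiProd_eq_sum (n : ℕ) :
    jacobiProd n = ∑ j ∈ range (2 * n + 2), C (jacobiProdCoeff n j) * X ^ j := by
  have hC (p : ℤ[X]) : eval₂ (Int.castRingHom ℤ[X][X]) (C X) p = C p := by simp
  rw [jacobiProd, prod_range_sub_mul_pow]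
  refine sum_congr rfl fun j _ => ?_
  simp only [jacobiProdCoeff, aeval_def, algebraMap_int_eq, hC, map_mul, map_pow, map_neg, map_one,
    pow_add, pow_mul]
  ring

lemma jacobiProdCoeff_add {n k : ℕ} (hk : k ≤ n) :
    jacobiProdCoeff n (n + 1 + k) = -jacobiProdCoeff n (n - k) := by
  rw [jacobiProdCoeff, jacobiProdCoeff, ← gaussBinom_symm (by omega : n - k ≤ 2 * n + 1),
    show 2 * n + 1 - (n + 1 + k) = n - k by omega, show 2 * n + 1 - (n - k) = n + 1 + k by omega,
    choose_two_sub_add_mul hk, choose_two_add_add_mul hk,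
    show n + 1 + k = n - k + (2 * k + 1) by omega, pow_add, pow_add, pow_mul]
  ring

lemma jacobiProdCoeff_sub {n k : ℕ} (hk : k ≤ n) : jacobiProdCoeff n (n - k) =
    (-1) ^ n * X ^ (n + n.choose 2 + n * n) *
      ((-1) ^ k * X ^ (k + 1).choose 2 * gaussBinom (2 * n + 1) (n - k)) := by
  have hsign : (-1 : ℤ[X]) ^ (n - k) = (-1) ^ n * (-1) ^ k := by
    rw [← Nat.sub_add_cancel hk, pow_add, Nat.add_sub_cancel, mul_assoc, ← pow_add, ← two_mul,
      pow_mul, neg_one_sq, one_pow, mul_one]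
  rw [jacobiProdCoeff, show 2 * n + 1 - (n - k) = n + 1 + k by omega, choose_two_sub_add_mul hk,
    hsign, pow_add]
  ring

theorem qPoch_sq (n : ℕ) : qPoch n ^ 2 = ∑ k ∈ range (n + 1),
    ((-1) ^ k * (2 * k + 1) : ℤ) • (X ^ (k + 1).choose 2 * gaussBinom (2 * n + 1) (n - k)) := by
  have h := eval_one_derivative_jacobiProd n
  rw [jacobiProd_eq_sum, eval_one_derivative_sum_C_mul_X_pow,
    sum_range_natCast_mul_of_antisymm n _ fun k hk => jacobiProdCoeff_add hk, neg_inj] at h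
  have hne : (-1 : ℤ[X]) ^ n * X ^ (n + n.choose 2 + n * n) ≠ 0 :=
    mul_ne_zero (pow_ne_zero _ (by simp)) (pow_ne_zero _ X_ne_zero)
  refine mul_left_cancel₀ hne (h.symm.trans ?_)
  rw [mul_sum]
  refine sum_congr rfl fun k hk => ?_
  rw [jacobiProdCoeff_sub (Nat.lt_succ_iff.1 (mem_range.1 hk)), zsmul_eq_mul]
  push_cast
  ring

lemma pow_dvd_prod_one_sub_pow_sub_one {R : Type*} [CommRing R] (x : R) {a : ℕ} {s : Finset ℕ}
    (h : ∀ i ∈ s, a ≤ i) : x ^ (a + 1) ∣ ∏ i ∈ s, (1 - x ^ (i + 1)) - 1 := by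
  refine prod_induction _ (fun z => x ^ (a + 1) ∣ z - 1) (fun u v hu hv => ?_) (by simp)
    fun i hi => ?_
  · rw [show u * v - 1 = u * (v - 1) + (u - 1) by ring]
    exact dvd_add (dvd_mul_of_dvd_right hv u) hu
  · rw [sub_sub_cancel_left, dvd_neg]
    exact pow_dvd_pow x (Nat.succ_le_succ (h i hi))

lemma X_pow_dvd_qPoch_mul_gaussBinom_sub_one {n k : ℕ} (hk : k ≤ n) :
    X ^ (n - k + 1) ∣ qPoch n * gaussBinom (2 * n + 1) (n - k) - 1 := by
  set A := ∏ i ∈ Ico (n - k) n, (1 - (X : ℤ[X]) ^ (i + 1))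
  set B := ∏ i ∈ Ico (2 * n + 1 - (n - k)) (2 * n + 1), (1 - (X : ℤ[X]) ^ (i + 1))
  have hA : X ^ (n - k + 1) ∣ A - 1 :=
    pow_dvd_prod_one_sub_pow_sub_one X fun i hi => (mem_Ico.1 hi).1
  have hB : X ^ (n - k + 1) ∣ B - 1 :=
    pow_dvd_prod_one_sub_pow_sub_one X fun i hi => by have := (mem_Ico.1 hi).1; omega
  have hAB : qPoch n * gaussBinom (2 * n + 1) (n - k) = A * B := by
    linear_combination -gaussBinom (2 * n + 1) (n - k) * qPoch_mul_prod_Ico (Nat.sub_le n k) +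
      A * gaussBinom_mul_qPoch (by omega : n - k ≤ 2 * n + 1)
  rw [hAB, show A * B - 1 = A * (B - 1) + (A - 1) by ring]
  exact dvd_add (dvd_mul_of_dvd_right hB A) hA

lemma coeff_mul_X_pow_of_X_pow_dvd_sub_one {R : Type*} [CommRing R] {p : R[X]} {M t N : ℕ}
    (hp : X ^ M ∣ p - 1) (hN : N < t + M) : (p * X ^ t).coeff N = if t = N then 1 else 0 := by
  rw [coeff_mul_X_pow']
  by_cases ht : t ≤ N
  · rw [if_pos ht, show p = 1 + (p - 1) by ring, coeff_add, X_pow_dvd_iff.1 hp (N - t) (by omega),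
      coeff_one, add_zero]
    exact if_congr (by omega) rfl rfl
  · rw [if_neg ht, if_neg (by omega)]

lemma le_choose_two_succ (k : ℕ) : k ≤ (k + 1).choose 2 := by
  rw [Nat.choose_succ_succ', Nat.choose_one_right]
  exact Nat.le_add_right k _

theorem coeff_qPoch_pow_three {n N : ℕ} (hN : N ≤ n) : (qPoch n ^ 3).coeff N =
    ∑ k ∈ range (n + 1), if (k + 1).choose 2 = N then (-1) ^ k * (2 * k + 1 : ℤ) else 0 := by
  rw [pow_succ, qPoch_sq, sum_mul, finsetSum_coeff]
  refine sum_congr rfl fun k hk => ?_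
  have hk : k ≤ n := Nat.lt_succ_iff.1 (mem_range.1 hk)
  rw [smul_mul_assoc, coeff_smul,
    show X ^ (k + 1).choose 2 * gaussBinom (2 * n + 1) (n - k) * qPoch n =
      qPoch n * gaussBinom (2 * n + 1) (n - k) * X ^ (k + 1).choose 2 by ring,
    coeff_mul_X_pow_of_X_pow_dvd_sub_one (X_pow_dvd_qPoch_mul_gaussBinom_sub_one hk)
      (by have := le_choose_two_succ k; omega)]
  split_ifs <;> simp

lemma coeff_qPoch_eq_of_lt {d n : ℕ} (h : d < n) :
    (qPoch n).coeff d = (qPoch (d + 1)).coeff d := by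
  obtain ⟨g, hg⟩ := pow_dvd_prod_one_sub_pow_sub_one (X : ℤ[X]) (s := Ico (d + 1) n)
    fun i hi => (mem_Ico.1 hi).1
  rw [← qPoch_mul_prod_Ico h, eq_add_of_sub_eq hg, mul_add, mul_one, coeff_add, mul_left_comm,
    coeff_X_pow_mul', if_neg (by omega), zero_add]

lemma coe_qPoch (n : ℕ) :
    (qPoch n : PowerSeries ℤ) = ∏ k ∈ range n, (1 - PowerSeries.X ^ (k + 1)) := by
  rw [qPoch, ← coeToPowerSeries.ringHom_apply, map_prod]
  simp

lemma X_pow_dvd_eulerQ_sub_qPoch (n : ℕ) :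
    PowerSeries.X ^ n ∣ eulerQ - (qPoch n : PowerSeries ℤ) := by
  refine PowerSeries.X_pow_dvd_iff.2 fun d hd => ?_
  rw [map_sub, eulerQ, PowerSeries.coeff_mk, ← coe_qPoch, coeff_coe, coeff_coe,
    coeff_qPoch_eq_of_lt hd, sub_self]

theorem coeff_eulerQ_pow_three (N : ℕ) : PowerSeries.coeff N (eulerQ ^ 3) =
    ∑ k ∈ range (N + 2), if (k + 1).choose 2 = N then (-1) ^ k * (2 * k + 1 : ℤ) else 0 := by
  have h := (X_pow_dvd_eulerQ_sub_qPoch (N + 1)).trans (sub_dvd_pow_sub_pow _ _ 3)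
  rw [← coeff_qPoch_pow_three N.le_succ, ← coeff_coe, Polynomial.coe_pow, ← sub_eq_zero,
    ← map_sub]
  exact PowerSeries.X_pow_dvd_iff.1 h N N.lt_succ_self

lemma two_mul_choose_two_succ (k : ℕ) : 2 * (k + 1).choose 2 = k * (k + 1) := by
  apply Nat.cast_injective (R := ℚ)
  push_cast [Nat.cast_choose_two]
  ring

lemma choose_two_succ_injective : Function.Injective fun k => (k + 1).choose 2 :=
  StrictMono.injective <| strictMono_nat_of_lt_succ fun k => by
    have := two_mul_choose_two_succ k
    have := two_mul_choose_two_succ (k + 1)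
    nlinarith

lemma exists_natCast_mul_succ_eq (j : ℤ) : ∃ k : ℕ, (k : ℤ) * (k + 1) = j * (j + 1) ∧
    (-1) ^ k * (2 * k + 1 : ℤ) = j.negOnePow * (2 * j + 1) := by
  rcases le_or_gt 0 j with hj | hj
  · lift j to ℕ using hj
    exact ⟨j, rfl, by rw [Int.coe_negOnePow_natCast]⟩
  · obtain ⟨k, rfl⟩ : ∃ k : ℕ, j = -(k + 1) := ⟨(-j - 1).toNat, by omega⟩
    refine ⟨k, by ring, ?_⟩
    rw [Int.negOnePow_neg, Int.negOnePow_succ, Units.val_neg, Int.coe_negOnePow_natCast]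
    ring

theorem coeff_eulerQ_pow_three_of_two_mul_eq {N : ℕ} {j : ℤ} (h : 2 * (N : ℤ) = j * (j + 1)) :
    PowerSeries.coeff N (eulerQ ^ 3) = j.negOnePow * (2 * j + 1) := by
  obtain ⟨k, hkj, hsign⟩ := exists_natCast_mul_succ_eq j
  have hk : (k + 1).choose 2 = N := by
    have := two_mul_choose_two_succ k
    zify at this
    linarith
  have hkN : k ∈ range (N + 2) := mem_range.2 (by have := le_choose_two_succ k; omega)
  rw [coeff_eulerQ_pow_three, sum_eq_single_of_mem k hkN, if_pos hk, hsign]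
  exact fun l _ hlk => if_neg fun hl => hlk (choose_two_succ_injective (hl.trans hk.symm))

theorem coeff_eulerQ_pow_three_eq_zero {N : ℕ} (h : ∀ j : ℤ, 2 * (N : ℤ) ≠ j * (j + 1)) :
    PowerSeries.coeff N (eulerQ ^ 3) = 0 := by
  rw [coeff_eulerQ_pow_three]
  refine sum_eq_zero fun k _ => if_neg fun hk => h k ?_
  rw [← hk]
  exact_mod_cast two_mul_choose_two_succ k

lemma exists_mul_three_mul_add_one_of_three_dvd {j : ℤ} (h : 3 ∣ j * (j + 1)) :
    ∃ m : ℤ, j * (j + 1) = 3 * (m * (3 * m + 1)) := by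
  obtain ⟨m, rfl | rfl | rfl⟩ : ∃ m, j = 3 * m ∨ j = 3 * m + 1 ∨ j = 3 * m + 2 :=
    ⟨j / 3, by omega⟩
  · exact ⟨m, by ring⟩
  · rw [show (3 * m + 1) * (3 * m + 1 + 1) = 3 * (3 * m ^ 2 + 3 * m) + 2 by ring,
      Int.dvd_add_right (dvd_mul_right 3 _)] at h
    norm_num at h
  · exact ⟨-(m + 1), by ring⟩

/-- The part of `(q;q)_∞³` supported on exponents divisible by 3 equals
`∑_{m ∈ ℤ} (−1)^m (6m+1) q^{3m(3m+1)/2}`: for every `n ≥ 0`, the coefficient of `q^{3n}`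
in `(q;q)_∞³` equals `(−1)^m (6m+1)` whenever `3n = 3m(3m+1)/2` (stated multiplied out as
`2·(3n) = 3·(m(3m+1))`), and equals `0` if no such `m` exists. -/
theorem eulerQ_cubed_zero_mod_three_part (n : ℕ) :
    (∀ m : ℤ, 2 * (3 * (n : ℤ)) = 3 * (m * (3 * m + 1)) →
      PowerSeries.coeff (R := ℤ) (3 * n) (eulerQ ^ 3) = (m.negOnePow : ℤ) * (6 * m + 1)) ∧
    ((¬ ∃ m : ℤ, 2 * (3 * (n : ℤ)) = 3 * (m * (3 * m + 1))) →
      PowerSeries.coeff (R := ℤ) (3 * n) (eulerQ ^ 3) = 0) := by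
  refine ⟨fun m hm => ?_, fun hm => coeff_eulerQ_pow_three_eq_zero fun j hj => hm ?_⟩
  · rw [coeff_eulerQ_pow_three_of_two_mul_eq (j := 3 * m) (by push_cast; linear_combination hm),
      show 3 * m = m + 2 * m by ring, Int.negOnePow_add, Int.negOnePow_two_mul, mul_one]
    ring
  · push_cast at hj
    obtain ⟨m, hjm⟩ :=
      exists_mul_three_mul_add_one_of_three_dvd (j := j) ⟨2 * n, by linear_combination -hj⟩
    exact ⟨m, by linear_combination hj + hjm⟩
end
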